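/- For T admitting an A-adjoint and α ∈ [0,1], ‖T‖_{A,α}² ≥ α c_A(T)² + (1−α)‖T‖_A². -/

import Mathlib

/-!
If `S` is an `A`-adjoint of `T`, then `R = S T` is symmetric for `⟨·, ·⟩_A` and
`⟨R x, x⟩_A = ‖T x‖_A²`. On the `A`-unit sphere Cauchy–Schwarz gives
`⟨Rⁿ x, x⟩_A² ≤ ⟨R²ⁿ x, x⟩_A`, while `⟨Rⁿ x, x⟩_A = O(‖R‖ⁿ)`; iterating along powers of two
yields `‖T x‖_A² ≤ ‖R‖`. Hence the sets whose suprema define `‖T‖_{A,α}` and `‖T‖_A` are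
bounded, which matters because `sSup` of an unbounded set of reals is `0`.

Pointwise, `α c_A(T)² + (1 - α) ‖T x‖_A² ≤ α |⟨T x, x⟩_A|² + (1 - α) ‖T x‖_A² ≤ ‖T‖_{A,α}²`,
and `‖T‖_A` lies in the closure of the values `‖T x‖_A` (or is `0`), where the same
closed inequality holds.
-/

open scoped ComplexOrder
open ContinuousLinearMap Filter Topology

variable {H : Type*} [NormedAddCommGroup H] [InnerProductSpace ℂ H] [CompleteSpace H]

/-- The A-semi-inner product `⟨x, y⟩_A = ⟨A x, y⟩` (Mathlib convention: conjugate
linear in the first variable). -/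
noncomputable def aInner (A : H →L[ℂ] H) (x y : H) : ℂ := inner ℂ (A x) y

/-- The A-seminorm `‖x‖_A = sqrt ⟨x, x⟩_A`. -/
noncomputable def aNorm (A : H →L[ℂ] H) (x : H) : ℝ := Real.sqrt (aInner A x x).re

/-- `T` is A-bounded. -/
def ABounded (A T : H →L[ℂ] H) : Prop := ∃ c > 0, ∀ x, aNorm A (T x) ≤ c * aNorm A x

/-- The A-operator seminorm. -/
noncomputable def opNormA (A T : H →L[ℂ] H) : ℝ :=
  sSup {r | ∃ x ∈ closure (Set.range A), aNorm A x = 1 ∧ r = aNorm A (T x)}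

/-- The A-numerical radius. -/
noncomputable def wA (A T : H →L[ℂ] H) : ℝ :=
  sSup {r | ∃ x, aNorm A x = 1 ∧ r = ‖aInner A (T x) x‖}

/-- The A-Crawford number. -/
noncomputable def cA (A T : H →L[ℂ] H) : ℝ :=
  sInf {r | ∃ x, aNorm A x = 1 ∧ r = ‖aInner A (T x) x‖}

/-- The `A_α`-seminorm `‖T‖_{A,α}`. -/
noncomputable def alphaNorm (A T : H →L[ℂ] H) (α : ℝ) : ℝ :=
  sSup {r | ∃ x, aNorm A x = 1 ∧
    r = Real.sqrt (α * ‖aInner A (T x) x‖ ^ 2 + (1 - α) * aNorm A (T x) ^ 2)}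

/-- `S` is the A-adjoint `T^{♯_A}` of `T`: the solution of `A X = T* A` whose
range lies in the closure of the range of `A`. -/
def IsAAdjoint (A T S : H →L[ℂ] H) : Prop :=
  A ∘L S = (ContinuousLinearMap.adjoint T) ∘L A ∧ ∀ x, S x ∈ closure (Set.range A)

lemma pow_two_pow_le_of_sq_le {q : ℕ → ℝ} (hq : ∀ n, q n ^ 2 ≤ q (2 * n)) (h1 : 0 ≤ q 1)
    (k : ℕ) : q 1 ^ 2 ^ k ≤ q (2 ^ k) := by
  induction k with
  | zero => simp
  | succ k ih =>
    calc q 1 ^ 2 ^ (k + 1) = (q 1 ^ 2 ^ k) ^ 2 := by rw [pow_succ, pow_mul]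
      _ ≤ q (2 ^ k) ^ 2 := pow_le_pow_left₀ (by positivity) ih 2
      _ ≤ q (2 ^ (k + 1)) := by rw [pow_succ' (2 : ℕ) k]; exact hq _

lemma le_of_forall_pow_two_pow_le_mul {a b C : ℝ} (hb : 0 ≤ b)
    (h : ∀ k : ℕ, a ^ 2 ^ k ≤ C * b ^ 2 ^ k) : a ≤ b := by
  by_contra! hba
  rcases hb.eq_or_lt with rfl | hb
  · have h0 := h 0
    norm_num at h0
    linarith
  · have ht : 1 < a / b := (one_lt_div hb).mpr hba
    obtain ⟨k, hk⟩ := pow_unbounded_of_one_lt C ht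
    have hpow : (a / b) ^ k ≤ (a / b) ^ 2 ^ k := pow_le_pow_right₀ ht.le k.lt_two_pow_self.le
    have hC : (a / b) ^ 2 ^ k ≤ C := by
      rw [div_pow, div_le_iff₀ (by positivity)]
      exact h k
    linarith

lemma le_of_sq_le_of_le_mul_pow {q : ℕ → ℝ} {b C : ℝ} (hb : 0 ≤ b)
    (hq : ∀ n, q n ^ 2 ≤ q (2 * n)) (hgrowth : ∀ n, 0 < n → q n ≤ C * b ^ n) : q 1 ≤ b := by
  rcases le_or_gt (q 1) 0 with h1 | h1
  · exact h1.trans hb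
  · exact le_of_forall_pow_two_pow_le_mul hb fun k =>
      (pow_two_pow_le_of_sq_le hq h1.le k).trans (hgrowth _ (Nat.two_pow_pos k))

lemma Real.sSup_mem_of_isClosed {E C : Set ℝ} (hC : IsClosed C) (h0 : 0 ∈ C) (hE : E ⊆ C)
    (hbdd : BddAbove E) : sSup E ∈ C := by
  rcases E.eq_empty_or_nonempty with rfl | hne
  · rwa [Real.sSup_empty]
  · exact hC.closure_subset_iff.mpr hE (csSup_mem_closure hne hbdd)

section SemiInnerProduct

variable {E : Type*} [NormedAddCommGroup E] [InnerProductSpace ℂ E]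

lemma aNorm_sq {A : E →L[ℂ] E} (hA : A.IsPositive) (x : E) :
    aNorm A x ^ 2 = (aInner A x x).re :=
  Real.sq_sqrt (hA.re_inner_nonneg_left x)

lemma cA_nonneg (A T : E →L[ℂ] E) : 0 ≤ cA A T :=
  Real.sInf_nonneg (by rintro _ ⟨x, -, rfl⟩; exact norm_nonneg _)

lemma cA_le_norm_aInner {A T : E →L[ℂ] E} {x : E} (hx : aNorm A x = 1) :
    cA A T ≤ ‖aInner A (T x) x‖ :=
  csInf_le ⟨0, by rintro _ ⟨y, -, rfl⟩; exact norm_nonneg _⟩ ⟨x, hx, rfl⟩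

lemma aInner_pow_apply_left {A R : E →L[ℂ] E} (hR : ∀ x y, aInner A (R x) y = aInner A x (R y))
    (n : ℕ) (x y : E) : aInner A ((R ^ n) x) y = aInner A x ((R ^ n) y) := by
  induction n generalizing x with
  | zero => rfl
  | succ n ih =>
    rw [pow_succ, mul_apply_eq_comp, ih, hR, ← mul_apply_eq_comp, ← pow_succ', pow_succ]

lemma re_aInner_pow_apply_le (A R : E →L[ℂ] E) (x : E) {n : ℕ} (hn : 0 < n) :
    (aInner A ((R ^ n) x) x).re ≤ ‖A‖ * ‖x‖ ^ 2 * ‖R‖ ^ n :=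
  calc (aInner A ((R ^ n) x) x).re ≤ ‖A ((R ^ n) x)‖ * ‖x‖ :=
        (Complex.re_le_norm _).trans (norm_inner_le_norm _ _)
    _ ≤ ‖A‖ * (‖R‖ ^ n * ‖x‖) * ‖x‖ := by
        gcongr
        refine A.le_opNorm_of_le (((R ^ n).le_opNorm x).trans ?_)
        gcongr
        exact norm_pow_le' R hn
    _ = ‖A‖ * ‖x‖ ^ 2 * ‖R‖ ^ n := by ring

end SemiInnerProduct

section CauchySchwarz

variable {A R : H →L[ℂ] H}

lemma aInner_eq_inner_sqrt (hA : A.IsPositive) (x y : H) :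
    aInner A x y = inner ℂ (CFC.sqrt A x) (CFC.sqrt A y) := by
  have hA0 : 0 ≤ A := (ContinuousLinearMap.nonneg_iff_isPositive A).mpr hA
  have hsqrt : IsSelfAdjoint (CFC.sqrt A) := IsSelfAdjoint.of_nonneg (CFC.sqrt_nonneg A)
  have hAx : A x = CFC.sqrt A (CFC.sqrt A x) := by
    rw [← mul_apply_eq_comp, CFC.sqrt_mul_sqrt_self A hA0]
  rw [aInner, hAx, ← ContinuousLinearMap.adjoint_inner_right, hsqrt.adjoint_eq]

lemma aNorm_eq_norm_sqrt (hA : A.IsPositive) (x : H) : aNorm A x = ‖CFC.sqrt A x‖ := by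
  rw [aNorm, aInner_eq_inner_sqrt hA]
  exact (congrArg Real.sqrt (inner_self_eq_norm_sq (𝕜 := ℂ) _)).trans
    (Real.sqrt_sq (norm_nonneg _))

lemma norm_aInner_le (hA : A.IsPositive) (x y : H) :
    ‖aInner A x y‖ ≤ aNorm A x * aNorm A y := by
  rw [aInner_eq_inner_sqrt hA, aNorm_eq_norm_sqrt hA, aNorm_eq_norm_sqrt hA]
  exact norm_inner_le_norm _ _

lemma sq_re_aInner_pow_apply_le (hA : A.IsPositive)
    (hR : ∀ x y, aInner A (R x) y = aInner A x (R y)) {x : H} (hx : aNorm A x = 1) (n : ℕ) :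
    (aInner A ((R ^ n) x) x).re ^ 2 ≤ (aInner A ((R ^ (2 * n)) x) x).re :=
  calc (aInner A ((R ^ n) x) x).re ^ 2 = |(aInner A ((R ^ n) x) x).re| ^ 2 := (sq_abs _).symm
    _ ≤ aNorm A ((R ^ n) x) ^ 2 := by
        gcongr
        calc |(aInner A ((R ^ n) x) x).re| ≤ ‖aInner A ((R ^ n) x) x‖ := Complex.abs_re_le_norm _
          _ ≤ aNorm A ((R ^ n) x) := by simpa [hx] using norm_aInner_le hA ((R ^ n) x) x
    _ = (aInner A ((R ^ n) x) ((R ^ n) x)).re := aNorm_sq hA _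
    _ = (aInner A ((R ^ (2 * n)) x) x).re := by
        rw [← aInner_pow_apply_left hR, ← mul_apply_eq_comp, ← pow_add, two_mul]

lemma re_aInner_apply_le_norm (hA : A.IsPositive)
    (hR : ∀ x y, aInner A (R x) y = aInner A x (R y)) {x : H} (hx : aNorm A x = 1) :
    (aInner A (R x) x).re ≤ ‖R‖ := by
  simpa using le_of_sq_le_of_le_mul_pow (norm_nonneg R)
    (sq_re_aInner_pow_apply_le hA hR hx) fun n hn => re_aInner_pow_apply_le A R x hn

end CauchySchwarz

namespace IsAAdjoint

variable {A T S : H →L[ℂ] H}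

lemma aInner_apply_left (hT : IsAAdjoint A T S) (x y : H) :
    aInner A (S x) y = aInner A x (T y) := by
  rw [aInner, ← comp_apply, hT.1, comp_apply, adjoint_inner_left, aInner]

lemma aInner_apply_right (hA : A.IsPositive) (hT : IsAAdjoint A T S) (x y : H) :
    aInner A x (S y) = aInner A (T x) y := by
  rw [aInner, hA.inner_left_eq_inner_right, ← comp_apply A S, hT.1, comp_apply,
    adjoint_inner_right, ← hA.inner_left_eq_inner_right, aInner]

lemma aNorm_apply_sq_le (hA : A.IsPositive) (hT : IsAAdjoint A T S) {x : H}
    (hx : aNorm A x = 1) : aNorm A (T x) ^ 2 ≤ ‖S ∘L T‖ := by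
  have hsymm : ∀ u y, aInner A ((S ∘L T) u) y = aInner A u ((S ∘L T) y) := fun u y => by
    rw [comp_apply, comp_apply, hT.aInner_apply_left, hT.aInner_apply_right hA]
  rw [aNorm_sq hA, ← hT.aInner_apply_left]
  exact re_aInner_apply_le_norm hA hsymm hx

lemma aNorm_apply_le (hA : A.IsPositive) (hT : IsAAdjoint A T S) {x : H}
    (hx : aNorm A x = 1) : aNorm A (T x) ≤ √‖S ∘L T‖ :=
  Real.le_sqrt_of_sq_le (hT.aNorm_apply_sq_le hA hx)

lemma sqrt_le_alphaNorm (hA : A.IsPositive) (hT : IsAAdjoint A T S) {α : ℝ} (hα0 : 0 ≤ α)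
    {x : H} (hx : aNorm A x = 1) :
    √(α * ‖aInner A (T x) x‖ ^ 2 + (1 - α) * aNorm A (T x) ^ 2) ≤ alphaNorm A T α := by
  refine le_csSup ⟨√‖S ∘L T‖, ?_⟩ ⟨x, hx, rfl⟩
  rintro _ ⟨y, hy, rfl⟩
  have hnum : ‖aInner A (T y) y‖ ≤ aNorm A (T y) := by
    simpa [hy] using norm_aInner_le hA (T y) y
  have hconv : α * ‖aInner A (T y) y‖ ^ 2 + (1 - α) * aNorm A (T y) ^ 2 ≤ aNorm A (T y) ^ 2 := by
    nlinarith [pow_le_pow_left₀ (norm_nonneg _) hnum 2]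
  exact Real.sqrt_le_sqrt (hconv.trans (hT.aNorm_apply_sq_le hA hy))

lemma cA_sq_add_le_alphaNorm_sq (hA : A.IsPositive) (hT : IsAAdjoint A T S) {α : ℝ}
    (hα0 : 0 ≤ α) (hα1 : α ≤ 1) {x : H} (hx : aNorm A x = 1) :
    α * cA A T ^ 2 + (1 - α) * aNorm A (T x) ^ 2 ≤ alphaNorm A T α ^ 2 := by
  have hcA : cA A T ^ 2 ≤ ‖aInner A (T x) x‖ ^ 2 :=
    pow_le_pow_left₀ (cA_nonneg A T) (cA_le_norm_aInner hx) 2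
  calc α * cA A T ^ 2 + (1 - α) * aNorm A (T x) ^ 2
      ≤ α * ‖aInner A (T x) x‖ ^ 2 + (1 - α) * aNorm A (T x) ^ 2 := by gcongr
    _ = √(α * ‖aInner A (T x) x‖ ^ 2 + (1 - α) * aNorm A (T x) ^ 2) ^ 2 :=
        (Real.sq_sqrt (by positivity)).symm
    _ ≤ alphaNorm A T α ^ 2 := by
        gcongr
        exact hT.sqrt_le_alphaNorm hA hα0 hx

lemma cA_sq_le_alphaNorm_sq (hA : A.IsPositive) (hT : IsAAdjoint A T S) {α : ℝ}
    (hα0 : 0 ≤ α) (hα1 : α ≤ 1) : α * cA A T ^ 2 ≤ alphaNorm A T α ^ 2 := by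
  by_cases hunit : ∃ x : H, aNorm A x = 1
  · obtain ⟨x, hx⟩ := hunit
    linarith [hT.cA_sq_add_le_alphaNorm_sq hA hα0 hα1 hx,
      mul_nonneg (sub_nonneg.mpr hα1) (sq_nonneg (aNorm A (T x)))]
  · have hcA : cA A T = 0 := by
      rw [cA]
      convert Real.sInf_empty
      refine Set.eq_empty_of_forall_notMem ?_
      rintro _ ⟨x, hx, -⟩
      exact hunit ⟨x, hx⟩
    calc α * cA A T ^ 2 = 0 := by simp [hcA]
      _ ≤ alphaNorm A T α ^ 2 := sq_nonneg _

end IsAAdjoint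

theorem stmt9 (A T S : H →L[ℂ] H) (hA : A.IsPositive) (hT : IsAAdjoint A T S)
    (α : ℝ) (hα : α ∈ Set.Icc (0:ℝ) 1) :
    alphaNorm A T α ^ 2 ≥ α * cA A T ^ 2 + (1 - α) * opNormA A T ^ 2 := by
  obtain ⟨hα0, hα1⟩ := hα
  let C : Set ℝ := {s | α * cA A T ^ 2 + (1 - α) * s ^ 2 ≤ alphaNorm A T α ^ 2}
  have hC : IsClosed C := isClosed_le (by fun_prop) continuous_const
  have h0 : (0 : ℝ) ∈ C := by simpa [C] using hT.cA_sq_le_alphaNorm_sq hA hα0 hα1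
  refine Real.sSup_mem_of_isClosed hC h0 ?_ ⟨√‖S ∘L T‖, ?_⟩ <;> rintro _ ⟨x, -, hx, rfl⟩
  · exact hT.cA_sq_add_le_alphaNorm_sq hA hα0 hα1 hx
  · exact hT.aNorm_apply_le hA hx
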